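/- Let k ≥ 2 and let n satisfy 2^{k−1} + 2^{k−2} − 1 < n ≤ 2^k − 1. Then every Boolean function f on n variables, all of whose variables are influencing, that is computed by a decision tree of depth k has GF(2) algebraic degree at least k; that is, every multilinear polynomial over ZMod 2 (degree at most 1 in each variable) that agrees with f on all Boolean inputs has total degree at least k. -/

import Mathlib

/-!
Prune the tree so that no variable repeats along a path; it still has depth at most `k = m + 1`.
Fewer than `2 ^ m` variables are queried above the bottom level `m`. Suppose some other variable
`v` is queried at most once on level `m`. As `v` is influencing, that node has two differently
labelled leaves, and the `k` variables on its path form a set `S` over which `f`, with all other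
variables set to `0`, has odd sum: the subtrees off the path do not see `v`, so their
contributions cancel in pairs `x`, `x + e_v`. That sum is the coefficient of `∏ i ∈ S, x i` in
the polynomial of `f`, which vanishes when the degree is below `k`. So every such `v` occupies
two of the at most `2 ^ m` bottom nodes, and `n ≤ 2 ^ m - 1 + 2 ^ (m - 1)`.
-/

/-- A deterministic decision tree over `n` Boolean variables: either a leaf
labelled by a `Bool`, or an internal node querying a variable with two subtrees. -/
inductive DTree (n : ℕ) where
  | leaf : Bool → DTree n
  | node : Fin n → DTree n → DTree n → DTree n

namespace DTree

/-- Evaluation of a decision tree on an input. -/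
def eval {n : ℕ} : DTree n → (Fin n → Bool) → Bool
  | leaf b, _ => b
  | node i t0 t1, x => if x i then eval t1 x else eval t0 x

/-- The depth of a decision tree: the maximum number of internal nodes on a
root-to-leaf path. -/
def depth {n : ℕ} : DTree n → ℕ
  | leaf _ => 0
  | node _ t0 t1 => max (depth t0) (depth t1) + 1

/-- A decision tree computes `f` if its evaluation agrees with `f` on all inputs. -/
def Computes {n : ℕ} (T : DTree n) (f : (Fin n → Bool) → Bool) : Prop :=
  ∀ x, T.eval x = f x

end DTree

/-- Variable `i` is influencing for `f`: there are inputs differing only in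
coordinate `i` on which `f` takes different values. -/
def Influences {n : ℕ} (f : (Fin n → Bool) → Bool) (i : Fin n) : Prop :=
  ∃ x x' : Fin n → Bool, (∀ j, j ≠ i → x j = x' j) ∧ f x ≠ f x'

open Finset

theorem Multiset.two_mul_card_le_of_forall_mem_or_two_le_count {α : Type*} [Fintype α]
    [DecidableEq α] {Q : Finset α} {M : Multiset α} (h : ∀ a, a ∈ Q ∨ 2 ≤ M.count a) :
    2 * Fintype.card α ≤ 2 * #Q + card M := by
  set F := ({a | 2 ≤ M.count a} : Finset α)
  have hcover : Fintype.card α ≤ #Q + #F := by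
    rw [← card_univ]
    refine (Finset.card_le_card fun a _ => ?_).trans (card_union_le Q F)
    simpa [F] using h a
  have hF : 2 * #F ≤ card M := calc
    2 * #F = ∑ _a ∈ F, 2 := by rw [sum_const, smul_eq_mul, mul_comm]
    _ ≤ ∑ a ∈ F, M.count a := sum_le_sum fun a ha => (mem_filter.1 ha).2
    _ ≤ ∑ a ∈ M.toFinset, M.count a := sum_le_sum_of_subset fun a ha =>
      mem_toFinset.2 (count_pos.1 (by have := (mem_filter.1 ha).2; omega))
    _ = card M := toFinset_sum_count_eq M
  omega

section SubcubeParity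

variable {σ : Type*} [DecidableEq σ]

theorem Finset.sum_powerset_eq_sum_powerset_erase {M : Type*} [AddCommMonoid M] {S : Finset σ}
    {i : σ} (hi : i ∈ S) (F : Finset σ → M) :
    ∑ T ∈ S.powerset, F T = ∑ T ∈ (S.erase i).powerset, (F T + F (insert i T)) := by
  rw [sum_add_distrib, ← sum_powerset_insert (notMem_erase i S), insert_erase hi]

theorem Finset.sum_powerset_eq_zero_of_insert_eq {R : Type*} [Semiring R] [CharP R 2]
    {S : Finset σ} {i : σ} (hi : i ∈ S) (F : Finset σ → R)
    (hF : ∀ T ⊆ S.erase i, F (insert i T) = F T) : ∑ T ∈ S.powerset, F T = 0 := by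
  rw [sum_powerset_eq_sum_powerset_erase hi]
  exact sum_eq_zero fun T hT => by rw [hF T (mem_powerset.1 hT), CharTwo.add_self_eq_zero]

theorem MvPolynomial.sum_powerset_eval_indicator_eq_zero {R : Type*} [CommRing R] [CharP R 2]
    (p : MvPolynomial σ R) {S : Finset σ} (h : p.totalDegree < #S) :
    ∑ T ∈ S.powerset, eval (fun i => if i ∈ T then (1 : R) else 0) p = 0 := by
  simp_rw [eval_eq]
  rw [sum_comm]
  refine sum_eq_zero fun d hd => ?_
  have hsupp : #d.support < #S := by
    refine lt_of_le_of_lt ?_ ((le_totalDegree hd).trans_lt h)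
    rw [card_eq_sum_ones, Finsupp.sum]
    exact sum_le_sum fun i hi => Nat.one_le_iff_ne_zero.2 (Finsupp.mem_support_iff.1 hi)
  obtain ⟨i, hiS, hid⟩ := exists_mem_notMem_of_card_lt_card hsupp
  refine sum_powerset_eq_zero_of_insert_eq hiS _ fun T _ => ?_
  refine congrArg _ (prod_congr rfl fun j hj => ?_)
  simp only [mem_insert, ne_of_mem_of_not_mem hj hid, false_or]

/-- The coefficient of `∏ i ∈ S, x i` in the `GF(2)` polynomial of `g` with all variables
outside `S` set to `false` (Möbius inversion over the subsets of `S`). -/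
def subcubeParity (g : (σ → Bool) → Bool) (S : Finset σ) : ZMod 2 :=
  ∑ T ∈ S.powerset, if g (fun i => decide (i ∈ T)) then 1 else 0

theorem subcubeParity_eq_zero_of_totalDegree_lt {g : (σ → Bool) → Bool}
    {p : MvPolynomial σ (ZMod 2)}
    (hp : ∀ x : σ → Bool, MvPolynomial.eval (fun i => if x i then (1 : ZMod 2) else 0) p
      = if g x then 1 else 0)
    {S : Finset σ} (h : p.totalDegree < #S) : subcubeParity g S = 0 := by
  rw [← p.sum_powerset_eval_indicator_eq_zero h, subcubeParity]
  refine sum_congr rfl fun T _ => ?_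
  rw [← hp]
  simp only [decide_eq_true_eq]

theorem subcubeParity_empty (g : (σ → Bool) → Bool) :
    subcubeParity g ∅ = if g (fun _ => false) then 1 else 0 := by
  rw [subcubeParity, powerset_empty, sum_singleton]
  simp

end SubcubeParity

theorem subcubeParity_eq_zero_of_not_influences {n : ℕ} {g : (Fin n → Bool) → Bool}
    {S : Finset (Fin n)} {v : Fin n} (hv : v ∈ S) (hg : ¬ Influences g v) :
    subcubeParity g S = 0 := by
  refine sum_powerset_eq_zero_of_insert_eq hv _ fun T _ => ?_
  by_contra hne
  exact hg ⟨fun i => decide (i ∈ insert v T), fun i => decide (i ∈ T),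
    fun j hj => by simp [hj], fun h => hne (by rw [h])⟩

namespace DTree

variable {n : ℕ}

def vars : DTree n → Finset (Fin n)
  | leaf _ => ∅
  | node i t0 t1 => insert i (vars t0 ∪ vars t1)

inductive Reduced : DTree n → Prop
  | leaf (b : Bool) : Reduced (leaf b)
  | node {i : Fin n} {t0 t1 : DTree n} :
      i ∉ vars t0 → i ∉ vars t1 → Reduced t0 → Reduced t1 → Reduced (node i t0 t1)

def prune : (Fin n → Option Bool) → DTree n → DTree n
  | _, leaf b => leaf b
  | ρ, node i t0 t1 =>
      match ρ i with
      | some false => prune ρ t0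
      | some true => prune ρ t1
      | none => node i (prune (Function.update ρ i (some false)) t0)
          (prune (Function.update ρ i (some true)) t1)

theorem eval_prune {x : Fin n → Bool} :
    ∀ {ρ : Fin n → Option Bool} (t : DTree n), (∀ i b, ρ i = some b → x i = b) →
      (prune ρ t).eval x = t.eval x
  | _, leaf _, _ => rfl
  | ρ, node i t0 t1, hx => by
    have hupdate : ∀ j b, Function.update ρ i (some (x i)) j = some b → x j = b := by
      intro j b hj
      rcases eq_or_ne j i with rfl | hji
      · simpa using hj
      · exact hx j b (by rwa [Function.update_of_ne hji] at hj)
    cases hρ : ρ i with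
    | some b =>
      cases b <;> simp [prune, eval, hρ, hx i _ hρ, eval_prune _ hx]
    | none =>
      cases hxi : x i <;> simp [prune, eval, hρ, hxi, eval_prune _ (hxi ▸ hupdate)]

theorem depth_prune : ∀ (ρ : Fin n → Option Bool) (t : DTree n), (prune ρ t).depth ≤ t.depth
  | _, leaf _ => le_rfl
  | ρ, node i t0 t1 => by
    have := depth_prune ρ t0
    have := depth_prune ρ t1
    have := depth_prune (Function.update ρ i (some false)) t0
    have := depth_prune (Function.update ρ i (some true)) t1
    cases hρ : ρ i with
    | some b => cases b <;> simp [prune, depth, hρ] <;> omega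
    | none => simp [prune, depth, hρ]; omega

theorem eq_none_of_mem_vars_prune {j : Fin n} :
    ∀ {ρ : Fin n → Option Bool} {t : DTree n}, j ∈ vars (prune ρ t) → ρ j = none
  | _, leaf _, h => by simp [prune, vars] at h
  | ρ, node i t0 t1, h => by
    cases hρ : ρ i with
    | some b => cases b <;> simp only [prune, hρ] at h <;> exact eq_none_of_mem_vars_prune h
    | none =>
      simp only [prune, hρ, vars, mem_insert, mem_union] at h
      rcases h with rfl | h | h
      · exact hρ
      all_goals
        have := eq_none_of_mem_vars_prune h
        rwa [Function.update_of_ne (by rintro rfl; simp at this)] at this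

theorem reduced_prune : ∀ (ρ : Fin n → Option Bool) (t : DTree n), Reduced (prune ρ t)
  | _, leaf b => .leaf b
  | ρ, node i t0 t1 => by
    cases hρ : ρ i with
    | some b => cases b <;> simp only [prune, hρ] <;> apply reduced_prune
    | none =>
      simp only [prune, hρ]
      exact .node (fun h => by simpa using eq_none_of_mem_vars_prune h)
        (fun h => by simpa using eq_none_of_mem_vars_prune h)
        (reduced_prune _ _) (reduced_prune _ _)

theorem exists_reduced (T : DTree n) :
    ∃ t : DTree n, Reduced t ∧ t.depth ≤ T.depth ∧ t.eval = T.eval :=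
  ⟨prune (fun _ => none) T, reduced_prune _ T, depth_prune _ T,
    funext fun _ => eval_prune T (by simp)⟩

theorem eval_congr {x x' : Fin n → Bool} :
    ∀ t : DTree n, (∀ j ∈ vars t, x j = x' j) → t.eval x = t.eval x'
  | leaf _, _ => rfl
  | node i t0 t1, h => by
    have hvars : ∀ j ∈ vars t0 ∪ vars t1, x j = x' j := fun j hj => h j (mem_insert_of_mem hj)
    simp only [eval, h i (mem_insert_self _ _),
      eval_congr t0 fun j hj => hvars j (mem_union_left _ hj),
      eval_congr t1 fun j hj => hvars j (mem_union_right _ hj)]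

theorem mem_vars_of_influences {t : DTree n} {v : Fin n} (h : Influences t.eval v) :
    v ∈ vars t := by
  obtain ⟨x, x', hxx, hne⟩ := h
  by_contra hv
  exact hne (eval_congr t fun j hj => hxx j (ne_of_mem_of_not_mem hj hv))

theorem influences_node {i v : Fin n} {t0 t1 : DTree n} (h : Influences (node i t0 t1).eval v) :
    i = v ∨ Influences t0.eval v ∨ Influences t1.eval v := by
  obtain ⟨x, x', hxx, hne⟩ := h
  refine or_iff_not_imp_left.2 fun hiv => ?_
  simp only [eval, hxx i hiv] at hne
  cases hx : x' i
  · exact .inl ⟨x, x', hxx, by simpa [hx] using hne⟩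
  · exact .inr ⟨x, x', hxx, by simpa [hx] using hne⟩

theorem subcubeParity_node {i : Fin n} {t0 t1 : DTree n} {S : Finset (Fin n)} (hi : i ∈ S)
    (h1 : i ∉ vars t1) :
    subcubeParity (node i t0 t1).eval S
      = subcubeParity t0.eval (S.erase i) + subcubeParity t1.eval (S.erase i) := by
  rw [subcubeParity, sum_powerset_eq_sum_powerset_erase hi, subcubeParity, subcubeParity,
    ← sum_add_distrib]
  refine sum_congr rfl fun T hT => ?_
  have hiT : i ∉ T := fun h => notMem_erase i S (mem_powerset.1 hT h)
  have heval0 : (node i t0 t1).eval (fun j => decide (j ∈ T))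
      = t0.eval (fun j => decide (j ∈ T)) := by
    simp [eval, hiT]
  have heval1 : (node i t0 t1).eval (fun j => decide (j ∈ insert i T))
      = t1.eval (fun j => decide (j ∈ T)) := by
    rw [eval, if_pos (by simp)]
    exact eval_congr t1 fun j hj => by simp [ne_of_mem_of_not_mem hj h1]
  rw [heval0, heval1]

def varsAbove : ℕ → DTree n → Finset (Fin n)
  | 0, _ => ∅
  | _ + 1, leaf _ => ∅
  | m + 1, node i t0 t1 => insert i (varsAbove m t0 ∪ varsAbove m t1)

def varsAt : ℕ → DTree n → Multiset (Fin n)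
  | _, leaf _ => 0
  | 0, node i _ _ => {i}
  | m + 1, node _ t0 t1 => varsAt m t0 + varsAt m t1

theorem card_varsAbove_add_one_le : ∀ (m : ℕ) (t : DTree n), #(varsAbove m t) + 1 ≤ 2 ^ m
  | 0, _ => by simp [varsAbove]
  | _ + 1, leaf _ => by simp [varsAbove, Nat.one_le_two_pow]
  | m + 1, node i t0 t1 => by
    have := card_varsAbove_add_one_le m t0
    have := card_varsAbove_add_one_le m t1
    have := card_union_le (varsAbove m t0) (varsAbove m t1)
    have := card_insert_le i (varsAbove m t0 ∪ varsAbove m t1)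
    rw [varsAbove, pow_succ]
    omega

theorem card_varsAt_le : ∀ (m : ℕ) (t : DTree n), Multiset.card (varsAt m t) ≤ 2 ^ m
  | _, leaf _ => by simp [varsAt]
  | 0, node _ _ _ => by simp [varsAt]
  | m + 1, node _ t0 t1 => by
    have := card_varsAt_le m t0
    have := card_varsAt_le m t1
    rw [varsAt, Multiset.card_add, pow_succ]
    omega

theorem mem_varsAt_of_mem_vars {v : Fin n} :
    ∀ {m : ℕ} {t : DTree n}, t.depth ≤ m + 1 → v ∉ varsAbove m t → v ∈ vars t → v ∈ varsAt m t
  | _, leaf _, _, _, hv => by simp [vars] at hv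
  | 0, node i t0 t1, hd, _, hv => by
    obtain ⟨ht0, ht1⟩ : t0.depth = 0 ∧ t1.depth = 0 := by simpa [depth] using hd
    cases t0 <;> cases t1 <;> simp_all [vars, varsAt, depth]
  | m + 1, node i t0 t1, hd, hq, hv => by
    obtain ⟨hd0, hd1⟩ : t0.depth ≤ m + 1 ∧ t1.depth ≤ m + 1 := by simpa [depth] using hd
    simp only [varsAbove, mem_insert, mem_union, not_or] at hq
    simp only [vars, mem_insert, mem_union] at hv
    rcases hv with rfl | hv | hv
    · exact absurd rfl hq.1
    · exact Multiset.mem_add.2 (.inl (mem_varsAt_of_mem_vars hd0 hq.2.1 hv))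
    · exact Multiset.mem_add.2 (.inr (mem_varsAt_of_mem_vars hd1 hq.2.2 hv))

theorem exists_subcubeParity_eq_one {v : Fin n} :
    ∀ {m : ℕ} {t : DTree n}, Reduced t → t.depth ≤ m + 1 → v ∉ varsAbove m t →
      (varsAt m t).count v ≤ 1 → Influences t.eval v →
      ∃ S : Finset (Fin n), #S = m + 1 ∧ S ⊆ vars t ∧ v ∈ S ∧ subcubeParity t.eval S = 1
  | _, leaf _, _, _, _, _, ⟨_, _, _, hne⟩ => absurd rfl hne
  | 0, node i t0 t1, .node _ hi1 _ _, hd, _, _, hinf => by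
    obtain ⟨ht0, ht1⟩ : t0.depth = 0 ∧ t1.depth = 0 := by simpa [depth] using hd
    cases t0 with
    | node => simp [depth] at ht0
    | leaf b0 =>
    cases t1 with
    | node => simp [depth] at ht1
    | leaf b1 =>
    obtain rfl : i = v := by
      rcases influences_node hinf with h | ⟨_, _, _, hne⟩ | ⟨_, _, _, hne⟩
      exacts [h, absurd rfl hne, absurd rfl hne]
    have hb : b0 ≠ b1 := by
      rintro rfl
      obtain ⟨_, _, _, hne⟩ := hinf
      simp [eval] at hne
    refine ⟨{i}, rfl, by simp [vars], mem_singleton_self i, ?_⟩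
    rw [subcubeParity_node (mem_singleton_self i) hi1, erase_singleton, subcubeParity_empty,
      subcubeParity_empty]
    cases b0 <;> cases b1 <;> simp_all [eval]
  | m + 1, node i t0 t1, .node hi0 hi1 hr0 hr1, hd, hq, hc, hinf => by
    obtain ⟨hd0, hd1⟩ : t0.depth ≤ m + 1 ∧ t1.depth ≤ m + 1 := by simpa [depth] using hd
    simp only [varsAbove, mem_insert, mem_union, not_or] at hq
    obtain ⟨hiv, hq0, hq1⟩ := hq
    rw [varsAt, Multiset.count_add] at hc
    have hcount {t : DTree n} (hd : t.depth ≤ m + 1) (hq : v ∉ varsAbove m t) (hv : v ∈ vars t) :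
        0 < (varsAt m t).count v :=
      Multiset.count_pos.2 (mem_varsAt_of_mem_vars hd hq hv)
    obtain ⟨S, hS, hSvars, hvS, hpar⟩ : ∃ S : Finset (Fin n), #S = m + 1 ∧
        S ⊆ vars t0 ∪ vars t1 ∧ v ∈ S ∧ subcubeParity t0.eval S + subcubeParity t1.eval S = 1 := by
      rcases (influences_node hinf).resolve_left (hiv ∘ Eq.symm) with h0 | h1
      · have := hcount hd0 hq0 (mem_vars_of_influences h0)
        obtain ⟨S, hS, hSvars, hvS, hpar⟩ := exists_subcubeParity_eq_one hr0 hd0 hq0 (by omega) h0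
        have hv1 : v ∉ vars t1 := fun hv => by have := hcount hd1 hq1 hv; omega
        refine ⟨S, hS, hSvars.trans subset_union_left, hvS, ?_⟩
        rw [hpar, subcubeParity_eq_zero_of_not_influences hvS (hv1 ∘ mem_vars_of_influences),
          add_zero]
      · have := hcount hd1 hq1 (mem_vars_of_influences h1)
        obtain ⟨S, hS, hSvars, hvS, hpar⟩ := exists_subcubeParity_eq_one hr1 hd1 hq1 (by omega) h1
        have hv0 : v ∉ vars t0 := fun hv => by have := hcount hd0 hq0 hv; omega
        refine ⟨S, hS, hSvars.trans subset_union_right, hvS, ?_⟩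
        rw [hpar, subcubeParity_eq_zero_of_not_influences hvS (hv0 ∘ mem_vars_of_influences),
          zero_add]
    have hiS : i ∉ S := fun h => (mem_union.1 (hSvars h)).elim hi0 hi1
    refine ⟨insert i S, by rw [card_insert_of_notMem hiS, hS], insert_subset_insert i hSvars,
      mem_insert_of_mem hvS, ?_⟩
    rw [subcubeParity_node (mem_insert_self i S) hi1, erase_insert hiS, hpar]

end DTree

theorem stmt11_general (k n : ℕ) (hk : 2 ≤ k)
    (h1 : 2 ^ (k - 1) + 2 ^ (k - 2) - 1 < n)
    (f : (Fin n → Bool) → Bool) (hinf : ∀ i, Influences f i)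
    (T : DTree n) (hdepth : T.depth = k) (hcomp : T.Computes f) :
    ∀ p : MvPolynomial (Fin n) (ZMod 2),
      (∀ i, p.degreeOf i ≤ 1) →
      (∀ x : Fin n → Bool,
        MvPolynomial.eval (fun i => if x i then (1 : ZMod 2) else 0) p
          = if f x then 1 else 0) →
      k ≤ p.totalDegree := by
  intro p _ hagree
  by_contra! hdeg
  obtain ⟨t, hred, hdt, rfl⟩ : ∃ t : DTree n, t.Reduced ∧ t.depth ≤ k ∧ t.eval = f := by
    obtain ⟨t, hred, hdt, heval⟩ := T.exists_reduced
    exact ⟨t, hred, hdepth ▸ hdt, heval.trans (funext hcomp)⟩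
  obtain ⟨m, rfl⟩ : ∃ m, k = m + 2 := ⟨k - 2, by omega⟩
  have hcover (v : Fin n) : v ∈ t.varsAbove (m + 1) ∨ 2 ≤ (t.varsAt (m + 1)).count v := by
    by_contra! hv
    obtain ⟨S, hS, -, -, hpar⟩ :=
      DTree.exists_subcubeParity_eq_one hred hdt hv.1 (by omega) (hinf v)
    exact one_ne_zero (hpar.symm.trans (subcubeParity_eq_zero_of_totalDegree_lt hagree (by omega)))
  have hn := Multiset.two_mul_card_le_of_forall_mem_or_two_le_count hcover
  have := t.card_varsAbove_add_one_le (m + 1)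
  have := t.card_varsAt_le (m + 1)
  rw [Fintype.card_fin] at hn
  rw [show m + 2 - 1 = m + 1 by omega, show m + 2 - 2 = m by omega] at h1
  have := pow_succ 2 m
  omega

/-- for `k ≥ 2` and `2^(k-1) + 2^(k-2) - 1 < n ≤ 2^k - 1`, every
Boolean function on `n` variables, all influencing, computed by a depth-`k`
decision tree, has GF(2) algebraic degree at least `k`: every multilinear
polynomial over `ZMod 2` agreeing with `f` on Boolean inputs has total degree
at least `k`. -/
theorem stmt11 (k n : ℕ) (hk : 2 ≤ k)
    (h1 : 2 ^ (k - 1) + 2 ^ (k - 2) - 1 < n) (h2 : n ≤ 2 ^ k - 1)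
    (f : (Fin n → Bool) → Bool) (hinf : ∀ i, Influences f i)
    (T : DTree n) (hdepth : T.depth = k) (hcomp : T.Computes f) :
    ∀ p : MvPolynomial (Fin n) (ZMod 2),
      (∀ i, p.degreeOf i ≤ 1) →
      (∀ x : Fin n → Bool,
        MvPolynomial.eval (fun i => if x i then (1 : ZMod 2) else 0) p
          = if f x then 1 else 0) →
      k ≤ p.totalDegree :=
  stmt11_general k n hk h1 f hinf T hdepth hcomp
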